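/- Let P be a lazy, irreducible, aperiodic Markov chain on a finite state space K with stationary distribution π, and let A ⊆ K with 0 < π(A) ≤ 1/2. Then ψ_evo(A) ≤ (1/2)·ψ̄_mod(A). -/

import Mathlib

open Finset MeasureTheory

noncomputable section

attribute [local instance] Classical.propDecidable

variable {K : Type*} [Fintype K]

/-- `matPow P t u v` is the `t`-step transition probability from `u` to `v`. -/
def matPow (P : K → K → ℝ) : ℕ → K → K → ℝ
  | 0 => fun u v => if u = v then 1 else 0
  | (t + 1) => fun u v => ∑ w, matPow P t u w * P w v

/-- `P` is a stochastic matrix with (strictly positive) stationary distribution `π`. -/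
structure IsMarkov (P : K → K → ℝ) (π : K → ℝ) : Prop where
  nonneg : ∀ u v, 0 ≤ P u v
  rowSum : ∀ u, ∑ v, P u v = 1
  piPos : ∀ v, 0 < π v
  piSum : ∑ v, π v = 1
  stationary : ∀ v, ∑ u, π u * P u v = π v

/-- `P` is lazy: every holding probability is at least `1/2`. -/
def IsLazy (P : K → K → ℝ) : Prop := ∀ u, (1 : ℝ) / 2 ≤ P u u

/-- irreducibility: every state can reach every other state. -/
def MCIrreducible (P : K → K → ℝ) : Prop := ∀ u v : K, ∃ t : ℕ, 0 < matPow P t u v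

/-- aperiodicity: the gcd of the return times of every state is `1`. -/
def MCAperiodic (P : K → K → ℝ) : Prop :=
  ∀ u : K, ∀ d : ℕ, (∀ t : ℕ, 0 < matPow P t u u → d ∣ t) → d ≤ 1

/-- reversibility: the detailed balance condition. -/
def IsReversible (P : K → K → ℝ) (π : K → ℝ) : Prop :=
  ∀ u v, π u * P u v = π v * P v u

/-- `π`-measure of a set. -/
def meas (π : K → ℝ) (A : Finset K) : ℝ := ∑ v ∈ A, π v

/-- the time reversal `P̄(u,v) = π(v) P(v,u) / π(u)`. -/
def rev (P : K → K → ℝ) (π : K → ℝ) (u v : K) : ℝ := π v * P v u / π u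

/-- transition probability from a point into a set, w.r.t. kernel `R`. -/
def setProb (R : K → K → ℝ) (v : K) (C : Finset K) : ℝ := ∑ c ∈ C, R v c

/-- the level set `A_u = {y : R(y,A) > u}`, w.r.t. kernel `R`. -/
def levelSet (R : K → K → ℝ) (A : Finset K) (u : ℝ) : Finset K :=
  Finset.univ.filter (fun y => u < setProb R y A)

/-- `g` is a fractional subset of `S` of measure `t`. -/
def IsFracSub (π : K → ℝ) (S : Finset K) (g : K → ℝ) (t : ℝ) : Prop :=
  (∀ v, 0 ≤ g v ∧ g v ≤ 1) ∧ (∀ v ∉ S, g v = 0) ∧ ∑ v, g v * π v = t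

/-- ergodic flow from a fractional subset `g` into `C`, w.r.t. kernel `R`. -/
def fracFlow (R : K → K → ℝ) (π : K → ℝ) (g : K → ℝ) (C : Finset K) : ℝ :=
  ∑ v, g v * π v * setProb R v C

/-- `Ψ(t, Aᶜ)` w.r.t. kernel `R`: for `t ≤ π(A)` the minimal flow into `Aᶜ` from a
fractional subset of `A` of measure `t`; for `t > π(A)` the minimal flow into `A`
from a fractional subset of `Aᶜ` of measure `1 − t`. -/
def Psi (R : K → K → ℝ) (π : K → ℝ) (A : Finset K) (t : ℝ) : ℝ :=
  if t ≤ meas π A then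
    sInf {q : ℝ | ∃ g : K → ℝ, IsFracSub π A g t ∧ q = fracFlow R π g Aᶜ}
  else
    sInf {q : ℝ | ∃ g : K → ℝ, IsFracSub π Aᶜ g (1 - t) ∧ q = fracFlow R π g A}

/-- `Ψ_big(t, Aᶜ)` w.r.t. kernel `R`: maximal flow into `Aᶜ` from a fractional
subset of `A` of measure `t`. -/
def PsiSup (R : K → K → ℝ) (π : K → ℝ) (A : Finset K) (t : ℝ) : ℝ :=
  sSup {q : ℝ | ∃ g : K → ℝ, IsFracSub π A g t ∧ q = fracFlow R π g Aᶜ}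

/-- the spread `ψ⁺(A)` (w.r.t. kernel `R`). -/
def psiPlus (R : K → K → ℝ) (π : K → ℝ) (A : Finset K) : ℝ :=
  (∫ t in (0:ℝ)..(meas π A), Psi R π A t) / (meas π A) ^ 2

/-- the quantity `ψ⁻(A)` (w.r.t. kernel `R`). -/
def psiMinus (R : K → K → ℝ) (π : K → ℝ) (A : Finset K) : ℝ :=
  (∫ t in (meas π A)..(1:ℝ), Psi R π A t) / (meas π A) ^ 2

/-- the modified spread `ψ_mod(A)` (w.r.t. kernel `R`). -/
def psiMod (R : K → K → ℝ) (π : K → ℝ) (A : Finset K) : ℝ :=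
  (∫ t in (0:ℝ)..(1:ℝ), Psi R π A t / min t (1 - t)) / meas π A

/-- the global spread `ψ_gl(A)` (w.r.t. kernel `R`). -/
def psiGl (R : K → K → ℝ) (π : K → ℝ) (A : Finset K) : ℝ :=
  (∫ t in (0:ℝ)..(1:ℝ), Psi R π A t) / (meas π A) ^ 2

/-- the quantity `ψ_big(A)` (w.r.t. kernel `R`). -/
def psiBig (R : K → K → ℝ) (π : K → ℝ) (A : Finset K) : ℝ :=
  (∫ t in (0:ℝ)..(meas π A), PsiSup R π A t) / (meas π A) ^ 2

/-- the evolving-set quantity `ψ_evo(A)`, with level sets taken w.r.t. kernel `R`. -/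
def psiEvo (R : K → K → ℝ) (π : K → ℝ) (A : Finset K) : ℝ :=
  1 - ∫ u in (0:ℝ)..(1:ℝ), Real.sqrt (meas π (levelSet R A u) / meas π A)

/-- ergodic flow `Q(B,C)`. -/
def ergFlow (P : K → K → ℝ) (π : K → ℝ) (B C : Finset K) : ℝ :=
  ∑ u ∈ B, ∑ v ∈ C, π u * P u v

/-- conductance `Φ(A)`. -/
def conductance (P : K → K → ℝ) (π : K → ℝ) (A : Finset K) : ℝ :=
  ergFlow P π A Aᶜ / meas π A

def Qone (P : K → K → ℝ) (π : K → ℝ) (C D : Finset K) : ℝ :=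
  ∑ v ∈ C, setProb P v D * π v

def Qtwo (P : K → K → ℝ) (π : K → ℝ) (C D : Finset K) : ℝ :=
  ∑ v ∈ C, Real.sqrt (setProb P v D) * π v

def Qinfty (P : K → K → ℝ) (π : K → ℝ) (C D : Finset K) : ℝ :=
  meas π (C.filter (fun v => 0 < setProb P v D))

/-- discrete gradient `h₁⁺(A)`. -/
def hOneP (P : K → K → ℝ) (π : K → ℝ) (A : Finset K) : ℝ :=
  Qone P π A Aᶜ / min (meas π A) (meas π Aᶜ)

/-- discrete gradient `h₁⁻(A)`. -/
def hOneM (P : K → K → ℝ) (π : K → ℝ) (A : Finset K) : ℝ :=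
  Qone P π Aᶜ A / min (meas π A) (meas π Aᶜ)

/-- discrete gradient `h₂⁺(A)`. -/
def hTwoP (P : K → K → ℝ) (π : K → ℝ) (A : Finset K) : ℝ :=
  Qtwo P π A Aᶜ / min (meas π A) (meas π Aᶜ)

/-- discrete gradient `h₂⁻(A)`. -/
def hTwoM (P : K → K → ℝ) (π : K → ℝ) (A : Finset K) : ℝ :=
  Qtwo P π Aᶜ A / min (meas π A) (meas π Aᶜ)

/-- discrete gradient `h_∞⁺(A)`. -/
def hInfP (P : K → K → ℝ) (π : K → ℝ) (A : Finset K) : ℝ :=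
  Qinfty P π A Aᶜ / min (meas π A) (meas π Aᶜ)

/-- discrete gradient `h_∞⁻(A)`. -/
def hInfM (P : K → K → ℝ) (π : K → ℝ) (A : Finset K) : ℝ :=
  Qinfty P π Aᶜ A / min (meas π A) (meas π Aᶜ)

/-- `p` is a probability distribution. -/
def IsDist (p : K → ℝ) : Prop := (∀ v, 0 ≤ p v) ∧ ∑ v, p v = 1

/-- the distribution after `t` steps starting from `p`. -/
def stepDist (P : K → K → ℝ) (p : K → ℝ) (t : ℕ) (v : K) : ℝ :=
  ∑ u, p u * matPow P t u v

/-- total variation distance. -/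
def tvDist (μ π : K → ℝ) : ℝ := (1 / 2) * ∑ v, |μ v - π v|

/-- chi-square distance. -/
def chi2Dist (μ π : K → ℝ) : ℝ := ∑ v, (μ v / π v - 1) ^ 2 * π v

/-- total variation mixing time `τ(ε)`: the max over initial distributions of the
least time at which total variation distance drops to `ε`. -/
def mixTV (P : K → K → ℝ) (π : K → ℝ) (ε : ℝ) : ℕ :=
  sSup {n : ℕ | ∃ p : K → ℝ, IsDist p ∧
    n = sInf {t : ℕ | tvDist (stepDist P p t) π ≤ ε}}

/-- chi-square mixing time `χ²(ε)`. -/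
def mixChi2 (P : K → K → ℝ) (π : K → ℝ) (ε : ℝ) : ℕ :=
  sSup {n : ℕ | ∃ p : K → ℝ, IsDist p ∧
    n = sInf {t : ℕ | chi2Dist (stepDist P p t) π ≤ ε}}

/-- `π₀ = min_v π(v)`. -/
def piMin (π : K → ℝ) : ℝ := sInf {r : ℝ | ∃ v : K, r = π v}

/-- `ψ⁺(x)`: worst spread over sets of measure at most `x`. -/
def psiPlusSize (R : K → K → ℝ) (π : K → ℝ) (x : ℝ) : ℝ :=
  sInf {r : ℝ | ∃ A : Finset K, 0 < meas π A ∧ meas π A ≤ x ∧ r = psiPlus R π A}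

/-- `ψ_evo(x)`: worst evolving-set quantity over sets of measure at most `x`. -/
def psiEvoSize (R : K → K → ℝ) (π : K → ℝ) (x : ℝ) : ℝ :=
  sInf {r : ℝ | ∃ A : Finset K, 0 < meas π A ∧ meas π A ≤ x ∧ r = psiEvo R π A}

/-- `ψ_big(x)`: worst `ψ_big` over sets of measure at most `x`. -/
def psiBigSize (R : K → K → ℝ) (π : K → ℝ) (x : ℝ) : ℝ :=
  sInf {r : ℝ | ∃ A : Finset K, 0 < meas π A ∧ meas π A ≤ x ∧ r = psiBig R π A}

/-- Dirichlet form. -/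
def dirichletForm (P : K → K → ℝ) (π : K → ℝ) (f : K → ℝ) : ℝ :=
  (1 / 2) * ∑ u, ∑ v, π u * P u v * (f u - f v) ^ 2

/-- variance w.r.t. `π`. -/
def varPi (π : K → ℝ) (f : K → ℝ) : ℝ :=
  ∑ v, π v * f v ^ 2 - (∑ v, π v * f v) ^ 2

/-- the spectral gap `λ`. -/
def specGap (P : K → K → ℝ) (π : K → ℝ) : ℝ :=
  sInf {r : ℝ | ∃ f : K → ℝ, (∃ u v, f u ≠ f v) ∧ r = dirichletForm P π f / varPi π f}

/-- `P_* = 1 − min_{u ∈ A} P(u, A)`. -/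
def Pstar (P : K → K → ℝ) (A : Finset K) : ℝ :=
  1 - sInf {r : ℝ | ∃ u ∈ A, r = setProb P u A}

/-- `P_min = min {P(u,v)/π(v) : u ∈ A, v ∈ Aᶜ, P(u,v) > 0}`. -/
def PminEdge (P : K → K → ℝ) (π : K → ℝ) (A : Finset K) : ℝ :=
  sInf {r : ℝ | ∃ u ∈ A, ∃ v ∈ Aᶜ, 0 < P u v ∧ r = P u v / π v}

/-- `w(t) = inf {y ∈ [0,1] : π(A_y) ≤ t}`. -/
def wfun (R : K → K → ℝ) (π : K → ℝ) (A : Finset K) (t : ℝ) : ℝ :=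
  sInf {y : ℝ | y ∈ Set.Icc (0:ℝ) 1 ∧ meas π (levelSet R A y) ≤ t}

/-!
Write `F u = π(A_u)` and `M = π(A)`. Stationarity gives `∫₀¹ F = M`, hence
`ψ_evo(A) = (2M)⁻¹ ∫₀¹ (√(F u) - √M)² du`. For `c ∈ [0,1]`,
`(√c - √M)² ≤ M - c - c log (M / c) = ∫₀¹ k(c,t) dt`, where `k(c,t) = (t - c)⁺ / t` for `t ≤ M`
and `(c - t)⁺ / t` for `t > M`. After Fubini it remains to bound `∫₀¹ k(F u, t) du` by `Ψ̄(t)/t`.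
By the layer-cake formula the flow of a fractional subset `g` into `A` is
`∫₀¹ ∑_{v ∈ A_u} g(v) π(v) du`, and this weight is at most `min(t, F u)` when `g` lives on `A`
with mass `t`, and at least `F u - t` when `g` lives on `Aᶜ` with mass `1 - t`.
-/

theorem integrableOn_Ioc_of_abs_le {f : ℝ → ℝ} {a b C : ℝ} (hf : Measurable f)
    (hC : ∀ x, |f x| ≤ C) : IntegrableOn f (Set.Ioc a b) :=
  Measure.integrableOn_of_bounded (by simp) hf.aestronglyMeasurable (.of_forall hC)

theorem setIntegral_Ioc_zero_one_const_sub {f : ℝ → ℝ} (c : ℝ)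
    (hf : IntegrableOn f (Set.Ioc (0:ℝ) 1)) :
    ∫ u in Set.Ioc (0:ℝ) 1, (c - f u) = c - ∫ u in Set.Ioc (0:ℝ) 1, f u := by
  rw [integral_sub (integrable_const c) hf, setIntegral_const]
  simp

theorem setIntegral_Ioc_zero_one_ite_lt (a : ℝ) {c : ℝ} (hc : c ∈ Set.Icc (0:ℝ) 1) :
    ∫ u in Set.Ioc (0:ℝ) 1, (if u < c then a else 0) = a * c := by
  have hind : (fun u : ℝ => if u < c then a else 0) = (Set.Iio c).indicator fun _ => a := by
    ext u; simp [Set.indicator_apply]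
  have hset : Set.Ioc (0:ℝ) 1 ∩ Set.Iio c = Set.Ioo 0 c := by
    ext u
    simp only [Set.mem_inter_iff, Set.mem_Ioc, Set.mem_Iio, Set.mem_Ioo]
    constructor
    · exact fun h => ⟨h.1.1, h.2⟩
    · exact fun h => ⟨⟨h.1, h.2.le.trans hc.2⟩, h.2⟩
  rw [hind, setIntegral_indicator measurableSet_Iio, hset, setIntegral_const]
  simp [hc.1, mul_comm]

section LevelKernel

variable {M c : ℝ}

def levelKernel (M c t : ℝ) : ℝ :=
  (if t ≤ M then max (t - c) 0 else max (c - t) 0) / t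

theorem measurable_levelKernel (M : ℝ) :
    Measurable fun p : ℝ × ℝ => levelKernel M p.1 p.2 :=
  (Measurable.ite (measurableSet_le measurable_snd measurable_const)
    ((measurable_snd.sub measurable_fst).max measurable_const)
    ((measurable_fst.sub measurable_snd).max measurable_const)).div measurable_snd

theorem abs_levelKernel_le (hc : c ∈ Set.Icc (0:ℝ) 1) (hM0 : 0 < M) (hM1 : M ≤ 1) (t : ℝ) :
    |levelKernel M c t| ≤ 1 / M := by
  rcases le_or_gt t 0 with ht | ht
  · rw [levelKernel, if_pos (ht.trans hM0.le), max_eq_right (by linarith [hc.1]), zero_div,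
      abs_zero]
    positivity
  rw [levelKernel, abs_of_nonneg (div_nonneg (by split_ifs <;> exact le_max_right _ _) ht.le),
    div_le_div_iff₀ ht hM0]
  split_ifs with htM
  · have : max (t - c) 0 ≤ t := max_le (by linarith [hc.1]) ht.le
    nlinarith
  · have : max (c - t) 0 ≤ 1 := max_le (by linarith [hc.2]) zero_le_one
    nlinarith

theorem levelKernel_eq_indicator_sub {t : ℝ} (ht : 0 < t) :
    levelKernel M c t = (Set.Ioc c M).indicator (fun t => 1 - c / t) t
      - (Set.Ioc M c).indicator (fun t => 1 - c / t) t := by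
  simp only [levelKernel, Set.indicator_apply, Set.mem_Ioc]
  rcases le_or_gt t M with htM | htM <;> rcases le_or_gt t c with htc | htc
  · simp [htM, htc, not_lt.2 htM, not_lt.2 htc]
  · simp [htM, htc, not_lt.2 htM, max_eq_left (sub_nonneg.2 htc.le)]
    field_simp
  · simp [htM, htc, not_le.2 htM]
    field_simp
  · simp [htM, htc, not_le.2 htM, not_le.2 htc, max_eq_right (sub_nonpos.2 htc.le)]

theorem setIntegral_levelKernel (hc : c ∈ Set.Icc (0:ℝ) 1) (hM : M ∈ Set.Icc (0:ℝ) 1) :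
    ∫ t in Set.Ioc (0:ℝ) 1, levelKernel M c t = ∫ t in c..M, (1 - c / t) := by
  rw [setIntegral_congr_fun measurableSet_Ioc fun t ht => levelKernel_eq_indicator_sub ht.1]
  rcases le_total c M with hcM | hMc
  · rw [Set.Ioc_eq_empty (not_lt.2 hcM), intervalIntegral.integral_of_le hcM]
    simp only [Set.indicator_empty, sub_zero]
    rw [setIntegral_indicator measurableSet_Ioc,
      Set.inter_eq_right.2 (Set.Ioc_subset_Ioc hc.1 hM.2)]
  · rw [Set.Ioc_eq_empty (not_lt.2 hMc), intervalIntegral.integral_symm,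
      intervalIntegral.integral_of_le hMc]
    simp only [Set.indicator_empty, zero_sub]
    rw [integral_neg, setIntegral_indicator measurableSet_Ioc,
      Set.inter_eq_right.2 (Set.Ioc_subset_Ioc hM.1 hc.2)]

theorem integral_one_sub_div (hc : 0 ≤ c) (hM : 0 < M) :
    ∫ t in c..M, (1 - c / t) = M - c - c * Real.log (M / c) := by
  rcases hc.eq_or_lt with rfl | hc
  · simp
  have hinv : IntervalIntegrable (fun t => c * t⁻¹) volume c M :=
    (intervalIntegral.intervalIntegrable_inv
      (fun t ht => (lt_of_lt_of_le (lt_min hc hM) ht.1).ne') continuousOn_id).const_mul c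
  simp only [div_eq_mul_inv]
  rw [intervalIntegral.integral_sub intervalIntegrable_const hinv,
    intervalIntegral.integral_const_mul, integral_inv_of_pos hc hM]
  simp [div_eq_mul_inv]

theorem sq_sqrt_sub_sqrt_le (hc : 0 ≤ c) (hM : 0 < M) :
    (√c - √M) ^ 2 ≤ M - c - c * Real.log (M / c) := by
  rcases hc.eq_or_lt with rfl | hc
  · simp [hM.le]
  have hsc := Real.sq_sqrt hc.le
  have hsM := Real.sq_sqrt hM.le
  have hpos := Real.sqrt_pos.2 hc
  have hlog : Real.log (M / c) ≤ 2 * (√M / √c - 1) := by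
    have hx : M / c = (√M / √c) ^ 2 := by rw [div_pow, hsc, hsM]
    rw [hx, Real.log_pow]
    push_cast
    linarith [Real.log_le_sub_one_of_pos (div_pos (Real.sqrt_pos.2 hM) hpos)]
  have hcx : c * (√M / √c) = √c * √M := by
    rw [mul_div_assoc', div_eq_iff hpos.ne']
    linear_combination (-√M) * hsc
  nlinarith [mul_le_mul_of_nonneg_left hlog hc.le]

theorem sq_sqrt_sub_sqrt_le_setIntegral_levelKernel (hc : c ∈ Set.Icc (0:ℝ) 1)
    (hM0 : 0 < M) (hM1 : M ≤ 1) :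
    (√c - √M) ^ 2 ≤ ∫ t in Set.Ioc (0:ℝ) 1, levelKernel M c t := by
  rw [setIntegral_levelKernel hc ⟨hM0.le, hM1⟩, integral_one_sub_div hc.1 hM0]
  exact sq_sqrt_sub_sqrt_le hc.1 hM0

end LevelKernel

theorem IsMarkov.rev {P : K → K → ℝ} {π : K → ℝ} (h : IsMarkov P π) :
    IsMarkov (_root_.rev P π) π where
  nonneg u v := div_nonneg (mul_nonneg (h.piPos v).le (h.nonneg v u)) (h.piPos u).le
  rowSum u := by
    simp only [_root_.rev]
    rw [← Finset.sum_div, h.stationary u, div_self (h.piPos u).ne']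
  piPos := h.piPos
  piSum := h.piSum
  stationary v := by
    simp only [_root_.rev, mul_div_cancel₀ _ (h.piPos _).ne']
    rw [← Finset.mul_sum, h.rowSum, mul_one]

section Spread

variable {R : K → K → ℝ} {π : K → ℝ} {A S C : Finset K} {g : K → ℝ} {t : ℝ}

namespace IsMarkov

theorem meas_nonneg (h : IsMarkov R π) (S : Finset K) : 0 ≤ meas π S :=
  Finset.sum_nonneg fun v _ => (h.piPos v).le

theorem meas_compl (h : IsMarkov R π) (S : Finset K) : meas π Sᶜ = 1 - meas π S := by
  rw [eq_sub_iff_add_eq, add_comm, ← h.piSum]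
  exact Finset.sum_add_sum_compl S π

theorem meas_le_one (h : IsMarkov R π) (S : Finset K) : meas π S ≤ 1 := by
  linarith [h.meas_nonneg Sᶜ, h.meas_compl S]

theorem setProb_nonneg (h : IsMarkov R π) (v : K) (C : Finset K) : 0 ≤ setProb R v C :=
  Finset.sum_nonneg fun c _ => h.nonneg v c

theorem setProb_le_one (h : IsMarkov R π) (v : K) (C : Finset K) : setProb R v C ≤ 1 :=
  h.rowSum v ▸ Finset.sum_le_sum_of_subset_of_nonneg (Finset.subset_univ C)
    fun c _ _ => h.nonneg v c

theorem setProb_compl (h : IsMarkov R π) (v : K) (C : Finset K) :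
    setProb R v Cᶜ = 1 - setProb R v C := by
  rw [eq_sub_iff_add_eq, add_comm, ← h.rowSum v]
  exact Finset.sum_add_sum_compl C (R v)

theorem sum_mul_setProb (h : IsMarkov R π) (A : Finset K) :
    ∑ v, π v * setProb R v A = meas π A := by
  simp only [setProb, Finset.mul_sum]
  rw [Finset.sum_comm]
  exact Finset.sum_congr rfl fun a _ => h.stationary a

theorem fracFlow_nonneg (h : IsMarkov R π) (hg : ∀ v, 0 ≤ g v) (C : Finset K) :
    0 ≤ fracFlow R π g C :=
  Finset.sum_nonneg fun v _ =>
    mul_nonneg (mul_nonneg (hg v) (h.piPos v).le) (h.setProb_nonneg v C)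

theorem fracFlow_le (h : IsMarkov R π) (hg : IsFracSub π S g t) (C : Finset K) :
    fracFlow R π g C ≤ t :=
  hg.2.2 ▸ Finset.sum_le_sum fun v _ =>
    mul_le_of_le_one_right (mul_nonneg (hg.1 v).1 (h.piPos v).le) (h.setProb_le_one v C)

end IsMarkov

theorem exists_isFracSub (ht0 : 0 ≤ t) (htS : t ≤ meas π S) : ∃ g, IsFracSub π S g t := by
  refine ⟨fun v => if v ∈ S then t / meas π S else 0,
    fun v => ?_, fun v hv => if_neg hv, ?_⟩
  · dsimp only
    split_ifs
    exacts [⟨div_nonneg ht0 (ht0.trans htS), div_le_one_of_le₀ htS (ht0.trans htS)⟩,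
      ⟨le_rfl, zero_le_one⟩]
  · simp only [ite_mul, zero_mul, Finset.sum_ite_mem, Finset.univ_inter, ← Finset.mul_sum]
    rcases (ht0.trans htS).eq_or_lt with h0 | h0
    · rw [← h0, div_zero, zero_mul]; linarith
    · exact div_mul_cancel₀ t h0.ne'

theorem IsFracSub.const_mul (hg : IsFracSub π S g t) {r : ℝ} (hr0 : 0 ≤ r) (hr1 : r ≤ 1) :
    IsFracSub π S (fun v => r * g v) (r * t) :=
  ⟨fun v => ⟨mul_nonneg hr0 (hg.1 v).1, mul_le_one₀ hr1 (hg.1 v).1 (hg.1 v).2⟩,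
    fun v hv => by simp [hg.2.1 v hv], by simp only [mul_assoc, ← Finset.mul_sum, hg.2.2]⟩

theorem fracFlow_const_mul (r : ℝ) :
    fracFlow R π (fun v => r * g v) C = r * fracFlow R π g C := by
  simp only [fracFlow, Finset.mul_sum, mul_assoc]

def minFlow (R : K → K → ℝ) (π : K → ℝ) (S C : Finset K) (t : ℝ) : ℝ :=
  sInf {q : ℝ | ∃ g : K → ℝ, IsFracSub π S g t ∧ q = fracFlow R π g C}

theorem Psi_eq_minFlow (R : K → K → ℝ) (π : K → ℝ) (A : Finset K) (t : ℝ) :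
    Psi R π A t = if t ≤ meas π A then minFlow R π A Aᶜ t else minFlow R π Aᶜ A (1 - t) :=
  rfl

theorem le_minFlow (ht0 : 0 ≤ t) (htS : t ≤ meas π S) {b : ℝ}
    (hb : ∀ g, IsFracSub π S g t → b ≤ fracFlow R π g C) : b ≤ minFlow R π S C t := by
  obtain ⟨g, hg⟩ := exists_isFracSub ht0 htS
  exact le_csInf ⟨_, g, hg, rfl⟩ (by rintro _ ⟨g, hg, rfl⟩; exact hb g hg)

namespace IsMarkov

theorem minFlow_nonneg (h : IsMarkov R π) : 0 ≤ minFlow R π S C t :=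
  Real.sInf_nonneg <| by
    rintro _ ⟨g, hg, rfl⟩
    exact h.fracFlow_nonneg (fun v => (hg.1 v).1) C

theorem minFlow_le (h : IsMarkov R π) (hg : IsFracSub π S g t) :
    minFlow R π S C t ≤ fracFlow R π g C :=
  csInf_le ⟨0, by rintro _ ⟨g, hg, rfl⟩; exact h.fracFlow_nonneg (fun v => (hg.1 v).1) C⟩
    ⟨g, hg, rfl⟩

theorem minFlow_le_self (h : IsMarkov R π) (ht0 : 0 ≤ t) (htS : t ≤ meas π S) :
    minFlow R π S C t ≤ t := by
  obtain ⟨g, hg⟩ := exists_isFracSub ht0 htS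
  exact (h.minFlow_le hg).trans (h.fracFlow_le hg C)

/-- Scaling a fractional subset of measure `t'` down to measure `t` scales its flow by `t / t'`. -/
theorem monotoneOn_minFlow (h : IsMarkov R π) :
    MonotoneOn (minFlow R π S C) (Set.Icc 0 (meas π S)) := by
  intro t ht t' ht' htt'
  rcases (ht.1.trans htt').eq_or_lt with h0 | h0
  · rw [le_antisymm (h0 ▸ htt') ht.1, ← h0]
  refine le_minFlow ht'.1 ht'.2 fun g hg => ?_
  have hr0 : 0 ≤ t / t' := div_nonneg ht.1 h0.le
  have hr1 : t / t' ≤ 1 := div_le_one_of_le₀ htt' h0.le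
  have hscaled := hg.const_mul hr0 hr1
  rw [div_mul_cancel₀ t h0.ne'] at hscaled
  calc minFlow R π S C t ≤ fracFlow R π (fun v => t / t' * g v) C := h.minFlow_le hscaled
    _ = t / t' * fracFlow R π g C := fracFlow_const_mul _
    _ ≤ fracFlow R π g C :=
      mul_le_of_le_one_left (h.fracFlow_nonneg (fun v => (hg.1 v).1) C) hr1

end IsMarkov

def layerSum (f w : K → ℝ) (u : ℝ) : ℝ := ∑ v, if u < f v then w v else 0

theorem measurable_layerSum (f w : K → ℝ) : Measurable (layerSum f w) :=
  Finset.measurable_sum _ fun _ _ =>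
    Measurable.ite measurableSet_Iio measurable_const measurable_const

theorem abs_layerSum_le (f w : K → ℝ) (u : ℝ) : |layerSum f w u| ≤ ∑ v, |w v| :=
  (Finset.abs_sum_le_sum_abs _ _).trans <| Finset.sum_le_sum fun _ _ => by
    split_ifs <;> simp

theorem layerSum_mem_Icc (f : K → ℝ) {w : K → ℝ} (hw : ∀ v, 0 ≤ w v) (u : ℝ) :
    layerSum f w u ∈ Set.Icc 0 (∑ v, w v) :=
  ⟨Finset.sum_nonneg fun v _ => by split_ifs <;> simp [hw v],
    Finset.sum_le_sum fun v _ => by split_ifs <;> simp [hw v]⟩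

theorem layerSum_sub (f w w' : K → ℝ) (u : ℝ) :
    layerSum f w u - layerSum f w' u = layerSum f (w - w') u := by
  simp only [layerSum, ← Finset.sum_sub_distrib, Pi.sub_apply]
  exact Finset.sum_congr rfl fun v _ => by split_ifs <;> simp

theorem integrableOn_layerSum (f w : K → ℝ) :
    IntegrableOn (layerSum f w) (Set.Ioc (0:ℝ) 1) :=
  integrableOn_Ioc_of_abs_le (measurable_layerSum f w) (abs_layerSum_le f w)

theorem integral_layerSum {f : K → ℝ} (hf : ∀ v, f v ∈ Set.Icc (0:ℝ) 1) (w : K → ℝ) :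
    ∫ u in Set.Ioc (0:ℝ) 1, layerSum f w u = ∑ v, w v * f v := by
  simp only [layerSum]
  rw [integral_finsetSum _ fun v _ => integrableOn_Ioc_of_abs_le
    (Measurable.ite measurableSet_Iio measurable_const measurable_const) (C := |w v|)
    fun u => by split_ifs <;> simp]
  exact Finset.sum_congr rfl fun v _ => setIntegral_Ioc_zero_one_ite_lt _ (hf v)

theorem meas_levelSet_eq_layerSum (R : K → K → ℝ) (π : K → ℝ) (A : Finset K) (u : ℝ) :
    meas π (levelSet R A u) = layerSum (fun v => setProb R v A) π u := by
  rw [meas, levelSet, Finset.sum_filter]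
  rfl

theorem measurable_meas_levelSet (R : K → K → ℝ) (π : K → ℝ) (A : Finset K) :
    Measurable fun u => meas π (levelSet R A u) := by
  simpa only [meas_levelSet_eq_layerSum] using measurable_layerSum _ π

namespace IsMarkov

theorem meas_levelSet_mem_Icc (h : IsMarkov R π) (u : ℝ) :
    meas π (levelSet R A u) ∈ Set.Icc (0:ℝ) 1 :=
  ⟨h.meas_nonneg _, h.meas_le_one _⟩

theorem integrableOn_comp_meas_levelSet (h : IsMarkov R π) {φ : ℝ → ℝ} (hφ : Continuous φ) :
    IntegrableOn (fun u => φ (meas π (levelSet R A u))) (Set.Ioc (0:ℝ) 1) := by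
  obtain ⟨C, hC⟩ :=
    (isCompact_Icc (a := (0:ℝ)) (b := 1)).exists_bound_of_continuousOn hφ.continuousOn
  exact integrableOn_Ioc_of_abs_le (hφ.measurable.comp (measurable_meas_levelSet R π A))
    fun u => hC _ (h.meas_levelSet_mem_Icc u)

theorem integral_meas_levelSet (h : IsMarkov R π) (A : Finset K) :
    ∫ u in Set.Ioc (0:ℝ) 1, meas π (levelSet R A u) = meas π A := by
  simp only [meas_levelSet_eq_layerSum]
  rw [integral_layerSum fun v => ⟨h.setProb_nonneg v A, h.setProb_le_one v A⟩,
    h.sum_mul_setProb]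

theorem fracFlow_eq_integral (h : IsMarkov R π) (g : K → ℝ) (C : Finset K) :
    fracFlow R π g C = ∫ u in Set.Ioc (0:ℝ) 1,
      layerSum (fun v => setProb R v C) (fun v => g v * π v) u := by
  rw [integral_layerSum fun v => ⟨h.setProb_nonneg v C, h.setProb_le_one v C⟩]
  rfl

theorem layerSum_bounds (h : IsMarkov R π) (hg : IsFracSub π S g t) (f : K → ℝ) (u : ℝ) :
    layerSum f (fun v => g v * π v) u ∈ Set.Icc 0 t ∧
      layerSum f π u - layerSum f (fun v => g v * π v) u ∈ Set.Icc 0 (1 - t) := by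
  have hmass : ∑ v, (π v - g v * π v) = 1 - t := by
    rw [Finset.sum_sub_distrib, h.piSum, hg.2.2]
  refine ⟨hg.2.2 ▸ layerSum_mem_Icc f (fun v => mul_nonneg (hg.1 v).1 (h.piPos v).le) u, ?_⟩
  rw [layerSum_sub, ← hmass]
  exact layerSum_mem_Icc f (fun v => by nlinarith [(hg.1 v).2, h.piPos v]) u

theorem integral_posPart_sub_le_Psi (h : IsMarkov R π) (ht0 : 0 ≤ t) (htA : t ≤ meas π A) :
    ∫ u in Set.Ioc (0:ℝ) 1, max (t - meas π (levelSet R A u)) 0 ≤ Psi R π A t := by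
  rw [Psi_eq_minFlow, if_pos htA]
  refine le_minFlow ht0 htA fun g hg => ?_
  have hflow : fracFlow R π g Aᶜ = t - fracFlow R π g A := by
    simp only [fracFlow, h.setProb_compl, mul_sub, mul_one, Finset.sum_sub_distrib, hg.2.2]
  have hF := integrableOn_layerSum (fun v => setProb R v A) π
  have hL := integrableOn_layerSum (fun v => setProb R v A) (fun v => g v * π v)
  rw [hflow, h.fracFlow_eq_integral, ← setIntegral_Ioc_zero_one_const_sub t hL]
  simp only [meas_levelSet_eq_layerSum]
  refine integral_mono ((integrable_const t).sub hF).pos_part ((integrable_const t).sub hL)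
    fun u => ?_
  obtain ⟨⟨-, hLt⟩, ⟨hLF, -⟩⟩ := h.layerSum_bounds hg (fun v => setProb R v A) u
  exact max_le (by linarith) (by linarith)

theorem integral_posPart_le_Psi (h : IsMarkov R π) (htA : meas π A < t) (ht1 : t ≤ 1) :
    ∫ u in Set.Ioc (0:ℝ) 1, max (meas π (levelSet R A u) - t) 0 ≤ Psi R π A t := by
  rw [Psi_eq_minFlow, if_neg htA.not_ge]
  refine le_minFlow (by linarith) (by linarith [h.meas_compl A]) fun g hg => ?_
  have hF := integrableOn_layerSum (fun v => setProb R v A) π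
  rw [h.fracFlow_eq_integral]
  simp only [meas_levelSet_eq_layerSum]
  refine integral_mono (hF.sub (integrable_const t)).pos_part
    (integrableOn_layerSum _ _) fun u => ?_
  obtain ⟨⟨hL0, -⟩, ⟨-, hFL⟩⟩ := h.layerSum_bounds hg (fun v => setProb R v A) u
  exact max_le (by linarith) hL0

theorem Psi_nonneg (h : IsMarkov R π) (t : ℝ) : 0 ≤ Psi R π A t := by
  rw [Psi_eq_minFlow]
  split_ifs
  exacts [h.minFlow_nonneg, h.minFlow_nonneg]

theorem Psi_le_min_div (h : IsMarkov R π) (hA0 : 0 < meas π A) (hA : meas π A ≤ 1 / 2)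
    (ht : t ∈ Set.Ioc (0:ℝ) 1) : Psi R π A t ≤ min t (1 - t) / meas π A := by
  rw [Psi_eq_minFlow, le_div_iff₀ hA0]
  split_ifs with htA
  · rw [min_eq_left (by linarith)]
    nlinarith [h.minFlow_le_self (C := Aᶜ) ht.1.le htA,
      h.minFlow_nonneg (S := A) (C := Aᶜ) (t := t)]
  · have := h.minFlow_le_self (S := Aᶜ) (C := A) (sub_nonneg.2 ht.2)
      (by linarith [h.meas_compl A])
    refine (mul_le_mul_of_nonneg_right this hA0.le).trans (le_min ?_ ?_)
    · linarith [mul_le_of_le_one_left hA0.le (by linarith : 1 - t ≤ 1)]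
    · exact mul_le_of_le_one_right (sub_nonneg.2 ht.2) (by linarith)

theorem abs_Psi_div_min_le (h : IsMarkov R π) (hA0 : 0 < meas π A) (hA : meas π A ≤ 1 / 2)
    (ht : t ∈ Set.Ioc (0:ℝ) 1) : |Psi R π A t / min t (1 - t)| ≤ 1 / meas π A := by
  have hmin : 0 ≤ min t (1 - t) := le_min ht.1.le (sub_nonneg.2 ht.2)
  rw [abs_of_nonneg (div_nonneg (h.Psi_nonneg t) hmin)]
  refine div_le_of_le_mul₀ hmin (by positivity) ?_
  rw [one_div_mul_eq_div]
  exact h.Psi_le_min_div hA0 hA ht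

theorem aemeasurable_Psi (h : IsMarkov R π) (hA : meas π A ≤ 1 / 2) :
    AEMeasurable (Psi R π A) (volume.restrict (Set.Ioc (0:ℝ) 1)) := by
  have hA0 := h.meas_nonneg A
  have hAc := h.meas_compl A
  rw [← Set.Ioc_union_Ioc_eq_Ioc hA0 (by linarith), aemeasurable_union_iff]
  constructor
  · refine aemeasurable_restrict_of_monotoneOn measurableSet_Ioc fun t ht t' ht' htt' => ?_
    simp only [Psi_eq_minFlow, if_pos ht.2, if_pos ht'.2]
    exact h.monotoneOn_minFlow ⟨ht.1.le, ht.2⟩ ⟨ht'.1.le, ht'.2⟩ htt'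
  · refine aemeasurable_restrict_of_antitoneOn measurableSet_Ioc fun t ht t' ht' htt' => ?_
    simp only [Psi_eq_minFlow, if_neg ht.1.not_ge, if_neg ht'.1.not_ge]
    exact h.monotoneOn_minFlow ⟨by linarith [ht'.2], by linarith [ht'.1]⟩
      ⟨by linarith [ht.2], by linarith [ht.1]⟩ (by linarith)

theorem integrableOn_Psi_div_min (h : IsMarkov R π) (hA0 : 0 < meas π A)
    (hA : meas π A ≤ 1 / 2) :
    IntegrableOn (fun t => Psi R π A t / min t (1 - t)) (Set.Ioc (0:ℝ) 1) :=
  Integrable.of_bound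
    ((h.aemeasurable_Psi hA).div
      (measurable_id.min (measurable_const.sub measurable_id)).aemeasurable).aestronglyMeasurable
    (1 / meas π A)
    ((ae_restrict_mem measurableSet_Ioc).mono fun _ ht => h.abs_Psi_div_min_le hA0 hA ht)

theorem psiEvo_eq (h : IsMarkov R π) (hA0 : 0 < meas π A) :
    psiEvo R π A = (∫ u in Set.Ioc (0:ℝ) 1,
      (√(meas π (levelSet R A u)) - √(meas π A)) ^ 2) / (2 * meas π A) := by
  have hexpand : ∀ u, (√(meas π (levelSet R A u)) - √(meas π A)) ^ 2 =
      meas π (levelSet R A u) + meas π A - 2 * √(meas π A) * √(meas π (levelSet R A u)) := by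
    intro u
    rw [sub_sq, Real.sq_sqrt (h.meas_nonneg _), Real.sq_sqrt hA0.le]
    ring
  have hF : IntegrableOn (fun u => meas π (levelSet R A u)) (Set.Ioc (0:ℝ) 1) :=
    h.integrableOn_comp_meas_levelSet continuous_id
  have hsqrt := h.integrableOn_comp_meas_levelSet (A := A) Real.continuous_sqrt
  simp only [hexpand]
  rw [integral_sub (f := fun u => meas π (levelSet R A u) + meas π A)
      (hF.add (integrable_const _)) (hsqrt.const_mul _),
    integral_add hF (integrable_const _), integral_const_mul, h.integral_meas_levelSet,
    setIntegral_const, Real.volume_real_Ioc_of_le zero_le_one, psiEvo,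
    intervalIntegral.integral_of_le zero_le_one]
  simp only [Real.sqrt_div' _ hA0.le]
  rw [integral_div]
  have hsM := Real.sq_sqrt hA0.le
  have hpos := Real.sqrt_pos.2 hA0
  set I := ∫ u in Set.Ioc (0:ℝ) 1, √(meas π (levelSet R A u))
  field_simp
  linear_combination (2 * I) * hsM

theorem integrable_levelKernel (h : IsMarkov R π) (hA0 : 0 < meas π A)
    (hA1 : meas π A ≤ 1) :
    Integrable (Function.uncurry fun t u => levelKernel (meas π A) (meas π (levelSet R A u)) t)
      ((volume.restrict (Set.Ioc (0:ℝ) 1)).prod (volume.restrict (Set.Ioc (0:ℝ) 1))) :=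
  Integrable.of_bound
    ((measurable_levelKernel _).comp
      (((measurable_meas_levelSet R π A).comp measurable_snd).prodMk
        measurable_fst)).aestronglyMeasurable
    (1 / meas π A) (.of_forall fun p =>
      abs_levelKernel_le (h.meas_levelSet_mem_Icc p.2) hA0 hA1 p.1)

theorem setIntegral_levelKernel_le_Psi_div (h : IsMarkov R π) (ht : t ∈ Set.Ioo (0:ℝ) 1) :
    ∫ u in Set.Ioc (0:ℝ) 1, levelKernel (meas π A) (meas π (levelSet R A u)) t
      ≤ Psi R π A t / min t (1 - t) := by
  refine le_trans ?_ (div_le_div_of_nonneg_left (h.Psi_nonneg t)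
    (lt_min ht.1 (sub_pos.2 ht.2)) (min_le_left _ _))
  simp only [levelKernel]
  rw [integral_div]
  refine div_le_div_of_nonneg_right ?_ ht.1.le
  by_cases htA : t ≤ meas π A
  · simpa only [if_pos htA] using h.integral_posPart_sub_le_Psi ht.1.le htA
  · simpa only [if_neg htA] using h.integral_posPart_le_Psi (not_le.1 htA) ht.2.le

theorem psiEvo_le_half_psiMod (h : IsMarkov R π) (hA0 : 0 < meas π A)
    (hA : meas π A ≤ 1 / 2) : psiEvo R π A ≤ 1 / 2 * psiMod R π A := by
  have hk := h.integrable_levelKernel hA0 (by linarith)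
  have hevo : ∫ u in Set.Ioc (0:ℝ) 1, (√(meas π (levelSet R A u)) - √(meas π A)) ^ 2
      ≤ ∫ u in Set.Ioc (0:ℝ) 1, ∫ t in Set.Ioc (0:ℝ) 1,
          levelKernel (meas π A) (meas π (levelSet R A u)) t :=
    integral_mono (h.integrableOn_comp_meas_levelSet (φ := fun c => (√c - √(meas π A)) ^ 2)
      (by fun_prop)) hk.integral_prod_right
      fun u => sq_sqrt_sub_sqrt_le_setIntegral_levelKernel (h.meas_levelSet_mem_Icc u) hA0
        (by linarith)
  have hspread : ∫ t in Set.Ioc (0:ℝ) 1, ∫ u in Set.Ioc (0:ℝ) 1,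
        levelKernel (meas π A) (meas π (levelSet R A u)) t
      ≤ ∫ t in Set.Ioc (0:ℝ) 1, Psi R π A t / min t (1 - t) := by
    -- at `t = 1` the division by `min t (1 - t) = 0` is junk, so drop that endpoint
    rw [integral_Ioc_eq_integral_Ioo, integral_Ioc_eq_integral_Ioo]
    exact setIntegral_mono_on
      (IntegrableOn.mono_set hk.integral_prod_left Set.Ioo_subset_Ioc_self)
      ((h.integrableOn_Psi_div_min hA0 hA).mono_set Set.Ioo_subset_Ioc_self)
      measurableSet_Ioo fun t ht => h.setIntegral_levelKernel_le_Psi_div ht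
  rw [integral_integral_swap hk] at hspread
  rw [h.psiEvo_eq hA0, psiMod, intervalIntegral.integral_of_le zero_le_one]
  calc _ ≤ (∫ t in Set.Ioc (0:ℝ) 1, Psi R π A t / min t (1 - t)) / (2 * meas π A) :=
        div_le_div_of_nonneg_right (hevo.trans hspread) (by positivity)
    _ = _ := by ring

end IsMarkov

end Spread

theorem evolving_le_half_modified_spread_general
    (P : K → K → ℝ) (π : K → ℝ) (A : Finset K)
    (hM : IsMarkov P π)
    (hA0 : 0 < meas π A) (hA : meas π A ≤ 1 / 2) :
    psiEvo (rev P π) π A ≤ (1 / 2) * psiMod (rev P π) π A :=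
  hM.rev.psiEvo_le_half_psiMod hA0 hA

/-- for a lazy, irreducible, aperiodic chain and `0 < π(A) ≤ 1/2`,
`ψ_evo(A) ≤ (1/2)·ψ̄_mod(A)`. -/
theorem evolving_le_half_modified_spread
    (P : K → K → ℝ) (π : K → ℝ) (A : Finset K)
    (hM : IsMarkov P π) (hlazy : IsLazy P)
    (hirr : MCIrreducible P) (hap : MCAperiodic P)
    (hA0 : 0 < meas π A) (hA : meas π A ≤ 1 / 2) :
    psiEvo (rev P π) π A ≤ (1 / 2) * psiMod (rev P π) π A :=
  evolving_le_half_modified_spread_general P π A hM hA0 hA
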